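/- Let $\Omega$ and $K$ be compact metric spaces with their Borel $\sigma$-algebras, $\Lambda$ a Borel probability measure on $\Omega$, and $F : \Omega \to \Omega$ a measurable map preserving $\Lambda$ that is mixing, i.e. for all bounded measurable $u, v : \Omega \to \mathbb{R}$, $\int u(F^n(\omega))\,v(\omega)\,d\Lambda(\omega) \to \int u\,d\Lambda \int v\,d\Lambda$. Let $\omega \mapsto \mu_\omega$ be a Markov kernel from $\Omega$ to $K$ and $\varphi : \Omega \times K \to K$ a measurable map such that for $\Lambda$-almost every $\omega$, $\varphi(\omega,\cdot)_*\mu_\omega = \mu_{F(\omega)}$. Define $\alpha$ on $\Omega \times K$ by $\alpha(B) = \int_\Omega \mu_\omega(\{x : (\omega,x) \in B\})\,d\Lambda(\omega)$ and $\tau(\omega,x) = (F(\omega), \varphi(\omega,x))$. Assume that for $\Lambda$-almost every $\omega$ and all continuous functions $h, \psi : \Omega \times K \to \mathbb{R}$, $\int_K h(\tau^n(\omega,x))\,\psi(\omega,x)\,d\mu_\omega(x) - \Big(\int_K h(F^n(\omega),y)\,d\mu_{F^n(\omega)}(y)\Big)\Big(\int_K \psi(\omega,x)\,d\mu_\omega(x)\Big)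 \to 0$ as $n \to \infty$. Then $\tau$ is mixing with respect to $\alpha$: for all Borel sets $A, B \subseteq \Omega \times K$, $\alpha(\tau^{-n}(A) \cap B) \to \alpha(A)\,\alpha(B)$ as $n \to \infty$. -/

import Mathlib

/-!
Write `α = Λ ⊗ κ`, where `κ ω = μ_ω`. For continuous `h, ψ` with values in `[-1, 1]`, the
correlation `∫ h ∘ τⁿ · ψ dα` is the `Λ`-integral of the fibrewise correlations. By the
decorrelation hypothesis and dominated convergence it is `o(1)`-close to `∫ u (Fⁿ ω) v(ω) dΛ`,
where `u`, `v` are the fibre averages of `h`, `ψ`, and mixing of `F` sends this to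
`∫ u dΛ ∫ v dΛ = ∫ h dα ∫ ψ dα`.
Since `τ` preserves `α`, the correlations of two indicators are `L¹`-close, uniformly in `n`, to
those of continuous functions approximating them (weak regularity of `α` and Urysohn's lemma).
-/

open MeasureTheory ProbabilityTheory Filter Set Topology

lemma abs_mul_sub_mul_le_of_abs_le_one {a b c d : ℝ} (hb : |b| ≤ 1) (hc : |c| ≤ 1) :
    |a * b - c * d| ≤ |a - c| + |b - d| :=
  calc |a * b - c * d| = |(a - c) * b + c * (b - d)| := by ring_nf
    _ ≤ |a - c| * |b| + |c| * |b - d| := by rw [← abs_mul, ← abs_mul]; exact abs_add_le _ _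
    _ ≤ |a - c| + |b - d| :=
      add_le_add (mul_le_of_le_one_right (abs_nonneg _) hb)
        (mul_le_of_le_one_left (abs_nonneg _) hc)

lemma abs_mul_le_one_of_abs_le_one {a b : ℝ} (ha : |a| ≤ 1) (hb : |b| ≤ 1) : |a * b| ≤ 1 :=
  (abs_mul a b).trans_le (mul_le_one₀ ha (abs_nonneg b) hb)

lemma tendsto_of_forall_approx {a : ℕ → ℝ} {L : ℝ}
    (h : ∀ ε > 0, ∃ (b : ℕ → ℝ) (L' : ℝ), Tendsto b atTop (𝓝 L') ∧
      (∀ n, |a n - b n| ≤ ε) ∧ |L' - L| ≤ ε) :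
    Tendsto a atTop (𝓝 L) := by
  refine Metric.tendsto_atTop.2 fun ε hε => ?_
  obtain ⟨b, L', hb, hab, hL⟩ := h (ε / 3) (by positivity)
  obtain ⟨N, hN⟩ := Metric.tendsto_atTop.1 hb (ε / 3) (by positivity)
  refine ⟨N, fun n hn => ?_⟩
  have hbn := hN n hn
  rw [Real.dist_eq] at hbn ⊢
  linarith [abs_sub_le (a n) (b n) L, abs_sub_le (b n) L' L, hab n]

section Correlation

variable {X : Type*} [MeasurableSpace X] {μ : Measure X}

lemma abs_integral_le_one [IsProbabilityMeasure μ] {f : X → ℝ} (hf : ∀ x, |f x| ≤ 1) :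
    |∫ x, f x ∂μ| ≤ 1 := by
  rw [← Real.norm_eq_abs]
  exact (norm_integral_le_of_norm_le_const (C := 1) (ae_of_all μ fun x => by
    rw [Real.norm_eq_abs]; exact hf x)).trans (by simp)

lemma tendsto_integral_of_ae_tendsto_sub [IsFiniteMeasure μ] {a b : ℕ → X → ℝ} {L C : ℝ}
    (ha : ∀ n, Integrable (a n) μ) (hb : ∀ n, Integrable (b n) μ)
    (hC : ∀ n x, |a n x - b n x| ≤ C) (hbL : Tendsto (fun n => ∫ x, b n x ∂μ) atTop (𝓝 L))
    (hab : ∀ᵐ x ∂μ, Tendsto (fun n => a n x - b n x) atTop (𝓝 0)) :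
    Tendsto (fun n => ∫ x, a n x ∂μ) atTop (𝓝 L) := by
  have hsub : Tendsto (fun n => ∫ x, a n x - b n x ∂μ) atTop (𝓝 0) := by
    simpa using tendsto_integral_of_dominated_convergence (fun _ => C)
      (fun n => ((ha n).sub (hb n)).aestronglyMeasurable) (integrable_const C)
      (fun n => ae_of_all _ (hC n)) hab
  simpa [integral_sub (ha _) (hb _)] using hsub.add hbL

lemma Measurable.integrable_of_abs_le [IsFiniteMeasure μ] {f : X → ℝ} (hf : Measurable f)
    {C : ℝ} (hC : ∀ x, |f x| ≤ C) : Integrable f μ :=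
  .of_bound hf.aestronglyMeasurable C (ae_of_all _ hC)

lemma MeasureTheory.MeasurePreserving.integral_comp_of_measurable {Y : Type*}
    [MeasurableSpace Y] {ν : Measure Y} {T : X → Y} (hT : MeasurePreserving T μ ν) {h : Y → ℝ}
    (hh : Measurable h) :
    ∫ x, h (T x) ∂μ = ∫ y, h y ∂ν := by
  rw [← integral_map hT.measurable.aemeasurable hh.aestronglyMeasurable, hT.map_eq]

variable [IsProbabilityMeasure μ] {a b f g : X → ℝ}

lemma abs_integral_mul_sub_integral_mul_le (ha : Measurable a) (hb : Measurable b)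
    (hf : Measurable f) (hg : Measurable g) (ha1 : ∀ x, |a x| ≤ 1) (hb1 : ∀ x, |b x| ≤ 1)
    (hf1 : ∀ x, |f x| ≤ 1) (hg1 : ∀ x, |g x| ≤ 1) :
    |∫ x, a x * b x ∂μ - ∫ x, f x * g x ∂μ| ≤
      ∫ x, |a x - f x| ∂μ + ∫ x, |b x - g x| ∂μ := by
  have hab : Integrable (fun x => a x * b x) μ :=
    (ha.mul hb).integrable_of_abs_le fun x => abs_mul_le_one_of_abs_le_one (ha1 x) (hb1 x)
  have hfg : Integrable (fun x => f x * g x) μ :=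
    (hf.mul hg).integrable_of_abs_le fun x => abs_mul_le_one_of_abs_le_one (hf1 x) (hg1 x)
  have haf : Integrable (fun x => |a x - f x|) μ :=
    ((ha.integrable_of_abs_le ha1).sub (hf.integrable_of_abs_le hf1)).abs
  have hbg : Integrable (fun x => |b x - g x|) μ :=
    ((hb.integrable_of_abs_le hb1).sub (hg.integrable_of_abs_le hg1)).abs
  rw [← integral_sub hab hfg, ← integral_add haf hbg]
  exact abs_integral_le_integral_abs.trans <| integral_mono (hab.sub hfg).abs (haf.add hbg)
    fun x => abs_mul_sub_mul_le_of_abs_le_one (hb1 x) (hf1 x)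

lemma abs_integral_mul_integral_sub_le (ha : Measurable a) (hb : Measurable b)
    (hf : Measurable f) (hg : Measurable g) (ha1 : ∀ x, |a x| ≤ 1) (hb1 : ∀ x, |b x| ≤ 1)
    (hf1 : ∀ x, |f x| ≤ 1) (hg1 : ∀ x, |g x| ≤ 1) :
    |(∫ x, a x ∂μ) * (∫ x, b x ∂μ) - (∫ x, f x ∂μ) * (∫ x, g x ∂μ)| ≤
      ∫ x, |a x - f x| ∂μ + ∫ x, |b x - g x| ∂μ := by
  have abs_integral_sub_le {u v : X → ℝ} (hu : Measurable u) (hv : Measurable v)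
      (hu1 : ∀ x, |u x| ≤ 1) (hv1 : ∀ x, |v x| ≤ 1) :
      |∫ x, u x ∂μ - ∫ x, v x ∂μ| ≤ ∫ x, |u x - v x| ∂μ := by
    rw [← integral_sub (hu.integrable_of_abs_le hu1) (hv.integrable_of_abs_le hv1)]
    exact abs_integral_le_integral_abs
  exact (abs_mul_sub_mul_le_of_abs_le_one (abs_integral_le_one hb1)
    (abs_integral_le_one hf1)).trans
      (add_le_add (abs_integral_sub_le ha hf ha1 hf1) (abs_integral_sub_le hb hg hb1 hg1))

lemma abs_integral_comp_iterate_mul_sub_le {T : X → X} (hT : MeasurePreserving T μ μ) (n : ℕ)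
    (ha : Measurable a) (hb : Measurable b) (hf : Measurable f) (hg : Measurable g)
    (ha1 : ∀ x, |a x| ≤ 1) (hb1 : ∀ x, |b x| ≤ 1) (hf1 : ∀ x, |f x| ≤ 1)
    (hg1 : ∀ x, |g x| ≤ 1) :
    |∫ x, a (T^[n] x) * b x ∂μ - ∫ x, f (T^[n] x) * g x ∂μ| ≤
      ∫ x, |a x - f x| ∂μ + ∫ x, |b x - g x| ∂μ := by
  have hTn := hT.iterate n
  rw [← hTn.integral_comp_of_measurable (h := fun x => |a x - f x|) (ha.sub hf).abs]
  exact abs_integral_mul_sub_integral_mul_le (ha.comp hTn.measurable) hb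
    (hf.comp hTn.measurable) hg (fun x => ha1 _) hb1 (fun x => hf1 _) hg1

lemma tendsto_integral_comp_iterate_mul_of_approx [TopologicalSpace X] [OpensMeasurableSpace X]
    {T : X → X} (hT : MeasurePreserving T μ μ)
    (hcont : ∀ f g : X → ℝ, Continuous f → Continuous g → (∀ x, |f x| ≤ 1) → (∀ x, |g x| ≤ 1) →
      Tendsto (fun n => ∫ x, f (T^[n] x) * g x ∂μ) atTop (𝓝 ((∫ x, f x ∂μ) * ∫ x, g x ∂μ)))
    (ha : Measurable a) (hb : Measurable b) (ha1 : ∀ x, |a x| ≤ 1) (hb1 : ∀ x, |b x| ≤ 1)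
    (ha_approx : ∀ ε > 0, ∃ f : X → ℝ, Continuous f ∧ (∀ x, |f x| ≤ 1) ∧
      ∫ x, |a x - f x| ∂μ ≤ ε)
    (hb_approx : ∀ ε > 0, ∃ g : X → ℝ, Continuous g ∧ (∀ x, |g x| ≤ 1) ∧
      ∫ x, |b x - g x| ∂μ ≤ ε) :
    Tendsto (fun n => ∫ x, a (T^[n] x) * b x ∂μ) atTop (𝓝 ((∫ x, a x ∂μ) * ∫ x, b x ∂μ)) := by
  refine tendsto_of_forall_approx fun ε hε => ?_
  obtain ⟨f, hf, hf1, haf⟩ := ha_approx (ε / 2) (half_pos hε)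
  obtain ⟨g, hg, hg1, hbg⟩ := hb_approx (ε / 2) (half_pos hε)
  refine ⟨_, _, hcont f g hf hg hf1 hg1, fun n => ?_, ?_⟩
  · calc _ ≤ ∫ x, |a x - f x| ∂μ + ∫ x, |b x - g x| ∂μ :=
          abs_integral_comp_iterate_mul_sub_le hT n ha hb hf.measurable hg.measurable
            ha1 hb1 hf1 hg1
      _ ≤ ε := by linarith
  · rw [abs_sub_comm]
    calc _ ≤ ∫ x, |a x - f x| ∂μ + ∫ x, |b x - g x| ∂μ :=
          abs_integral_mul_integral_sub_le ha hb hf.measurable hg.measurable ha1 hb1 hf1 hg1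
      _ ≤ ε := by linarith

end Correlation

section Approximation

variable {X : Type*} [TopologicalSpace X] [NormalSpace X] [MeasurableSpace X]
  [OpensMeasurableSpace X] {μ : Measure X}

lemma exists_continuous_integral_abs_indicator_sub_le [IsFiniteMeasure μ] [μ.WeaklyRegular]
    {A : Set X} (hA : MeasurableSet A) {ε : ℝ} (hε : 0 < ε) :
    ∃ f : X → ℝ, Continuous f ∧ (∀ x, |f x| ≤ 1) ∧ ∫ x, |A.indicator 1 x - f x| ∂μ ≤ ε := by
  have hε' : ENNReal.ofReal (ε / 2) ≠ 0 := (ENNReal.ofReal_pos.2 (half_pos hε)).ne'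
  obtain ⟨U, hAU, hU, -, hUA⟩ := hA.exists_isOpen_sdiff_lt (measure_ne_top μ A) hε'
  obtain ⟨C, hCA, hC, hAC⟩ := hA.exists_isClosed_sdiff_lt (measure_ne_top μ A) hε'
  obtain ⟨f, hfU, hfC, hf01⟩ := exists_continuous_zero_one_of_isClosed hU.isClosed_compl hC
    (disjoint_compl_left_iff_subset.2 (hCA.trans hAU))
  have habs_le : ∀ x, |A.indicator 1 x - f x| ≤ (U \ C).indicator 1 x := by
    intro x
    by_cases hxC : x ∈ C
    · rw [indicator_of_mem (hCA hxC), hfC hxC, sub_self, abs_zero]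
      exact indicator_nonneg (fun _ _ => zero_le_one) x
    by_cases hxU : x ∈ U
    · rw [indicator_of_mem (show x ∈ U \ C from ⟨hxU, hxC⟩), Pi.one_apply, abs_le]
      have hfx := hf01 x
      by_cases hxA : x ∈ A
      · rw [indicator_of_mem hxA, Pi.one_apply]; constructor <;> linarith [hfx.1, hfx.2]
      · rw [indicator_of_notMem hxA]; constructor <;> linarith [hfx.1, hfx.2]
    · have hxA : x ∉ A := fun h => hxU (hAU h)
      simp [hxU, hxA, hfU hxU]
  refine ⟨f, f.continuous, fun x => abs_le.2 ⟨by linarith [(hf01 x).1], (hf01 x).2⟩, ?_⟩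
  have hUC : MeasurableSet (U \ C) := hU.measurableSet.diff hC.measurableSet
  calc ∫ x, |A.indicator 1 x - f x| ∂μ ≤ ∫ x, (U \ C).indicator 1 x ∂μ :=
        integral_mono_of_nonneg (ae_of_all _ fun x => abs_nonneg _)
          ((integrable_const 1).indicator hUC) (ae_of_all _ habs_le)
    _ = μ.real (U \ C) := integral_indicator_one hUC
    _ ≤ μ.real (U \ A) + μ.real (A \ C) :=
        (measureReal_mono (sdiff_triangle U A C)).trans (measureReal_union_le _ _)
    _ ≤ ε / 2 + ε / 2 := add_le_add (ENNReal.toReal_le_of_le_ofReal (by positivity) hUA.le)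
          (ENNReal.toReal_le_of_le_ofReal (by positivity) hAC.le)
    _ = ε := add_halves ε

lemma tendsto_measure_preimage_iterate_inter_of_continuous [IsProbabilityMeasure μ]
    [μ.WeaklyRegular] {T : X → X} (hT : MeasurePreserving T μ μ)
    (hcont : ∀ f g : X → ℝ, Continuous f → Continuous g → (∀ x, |f x| ≤ 1) → (∀ x, |g x| ≤ 1) →
      Tendsto (fun n => ∫ x, f (T^[n] x) * g x ∂μ) atTop (𝓝 ((∫ x, f x ∂μ) * ∫ x, g x ∂μ)))
    {A B : Set X} (hA : MeasurableSet A) (hB : MeasurableSet B) :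
    Tendsto (fun n => μ (T^[n] ⁻¹' A ∩ B)) atTop (𝓝 (μ A * μ B)) := by
  have hind {S : Set X} (x : X) : |S.indicator (1 : X → ℝ) x| ≤ 1 := by
    by_cases hx : x ∈ S <;> simp [hx]
  have h := tendsto_integral_comp_iterate_mul_of_approx hT hcont (measurable_one.indicator hA)
    (measurable_one.indicator hB) hind hind
    (fun ε hε => exists_continuous_integral_abs_indicator_sub_le hA hε)
    (fun ε hε => exists_continuous_integral_abs_indicator_sub_le hB hε)
  rw [← ENNReal.tendsto_toReal_iff (fun n => measure_ne_top μ _)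
    (ENNReal.mul_ne_top (measure_ne_top μ A) (measure_ne_top μ B)), ENNReal.toReal_mul]
  have hcorr (n : ℕ) : ∫ x, A.indicator 1 (T^[n] x) * B.indicator 1 x ∂μ =
      μ.real (T^[n] ⁻¹' A ∩ B) := by
    rw [← integral_indicator_one (((hT.iterate n).measurable hA).inter hB), inter_indicator_one]
    rfl
  simp only [← measureReal_def, ← hcorr, ← integral_indicator_one hA, ← integral_indicator_one hB]
  exact h

end Approximation

section SkewProduct

variable {Ω K : Type*} [MeasurableSpace Ω] [MeasurableSpace K] {Λ : Measure Ω} {κ : Kernel Ω K}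

lemma measurePreserving_skewProduct [SFinite Λ] [IsSFiniteKernel κ] {F : Ω → Ω}
    (hF : MeasurePreserving F Λ Λ) {φ : Ω × K → K} (hφ : Measurable φ)
    (hinv : ∀ᵐ ω ∂Λ, (κ ω).map (fun x => φ (ω, x)) = κ (F ω)) :
    MeasurePreserving (fun p : Ω × K => (F p.1, φ p)) (Λ.compProd κ) (Λ.compProd κ) := by
  have hτ : Measurable (fun p : Ω × K => (F p.1, φ p)) :=
    (hF.measurable.comp measurable_fst).prodMk hφ
  refine ⟨hτ, Measure.ext fun s hs => ?_⟩
  have hfiber : ∀ᵐ ω ∂Λ, κ ω (Prod.mk ω ⁻¹' ((fun p : Ω × K => (F p.1, φ p)) ⁻¹' s)) =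
      κ (F ω) (Prod.mk (F ω) ⁻¹' s) := by
    filter_upwards [hinv] with ω hω
    have hφω : Measurable fun x => φ (ω, x) := hφ.comp measurable_prodMk_left
    rw [← hω, Measure.map_apply hφω (measurable_prodMk_left hs)]
    rfl
  rw [Measure.map_apply hτ hs, Measure.compProd_apply (hτ hs), Measure.compProd_apply hs,
    lintegral_congr_ae hfiber]
  exact hF.lintegral_comp (Kernel.measurable_kernel_prodMk_left hs)

lemma abs_integral_kernel_prod_right_le_one [IsMarkovKernel κ] {f : Ω × K → ℝ}
    (hf : ∀ p, |f p| ≤ 1) (ω : Ω) : |∫ x, f (ω, x) ∂κ ω| ≤ 1 :=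
  abs_integral_le_one fun x => hf (ω, x)

lemma Measurable.integral_kernel_prod_right' [IsSFiniteKernel κ] {f : Ω × K → ℝ}
    (hf : Measurable f) : Measurable fun ω => ∫ x, f (ω, x) ∂κ ω :=
  hf.stronglyMeasurable.integral_kernel_prod_right'.measurable

lemma tendsto_integral_comp_iterate_mul_compProd [IsProbabilityMeasure Λ] [IsMarkovKernel κ]
    {F : Ω → Ω} (hF : Measurable F) {T : Ω × K → Ω × K} (hT : Measurable T)
    {f g : Ω × K → ℝ} (hf : Measurable f) (hg : Measurable g)
    (hf1 : ∀ p, |f p| ≤ 1) (hg1 : ∀ p, |g p| ≤ 1)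
    (hmix : Tendsto (fun n => ∫ ω, (∫ y, f (F^[n] ω, y) ∂κ (F^[n] ω)) * ∫ x, g (ω, x) ∂κ ω ∂Λ)
      atTop (𝓝 ((∫ ω, ∫ y, f (ω, y) ∂κ ω ∂Λ) * ∫ ω, ∫ x, g (ω, x) ∂κ ω ∂Λ)))
    (hdecor : ∀ᵐ ω ∂Λ, Tendsto (fun n => (∫ x, f (T^[n] (ω, x)) * g (ω, x) ∂κ ω) -
      (∫ y, f (F^[n] ω, y) ∂κ (F^[n] ω)) * ∫ x, g (ω, x) ∂κ ω) atTop (𝓝 0)) :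
    Tendsto (fun n => ∫ p, f (T^[n] p) * g p ∂(Λ.compProd κ)) atTop
      (𝓝 ((∫ p, f p ∂(Λ.compProd κ)) * ∫ p, g p ∂(Λ.compProd κ))) := by
  have hfgn (n : ℕ) : Measurable fun p => f (T^[n] p) * g p := (hf.comp (hT.iterate n)).mul hg
  have hfgn1 (n : ℕ) (p : Ω × K) : |f (T^[n] p) * g p| ≤ 1 :=
    abs_mul_le_one_of_abs_le_one (hf1 _) (hg1 p)
  have hprod1 (n : ℕ) (ω : Ω) :
      |(∫ y, f (F^[n] ω, y) ∂κ (F^[n] ω)) * ∫ x, g (ω, x) ∂κ ω| ≤ 1 :=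
    abs_mul_le_one_of_abs_le_one (abs_integral_kernel_prod_right_le_one hf1 _)
      (abs_integral_kernel_prod_right_le_one hg1 ω)
  rw [Measure.integral_compProd (hf.integrable_of_abs_le hf1),
    Measure.integral_compProd (hg.integrable_of_abs_le hg1)]
  refine (tendsto_integral_of_ae_tendsto_sub (C := 2) (fun n => ?_) (fun n => ?_)
    (fun n ω => ?_) hmix hdecor).congr fun n => (Measure.integral_compProd
      ((hfgn n).integrable_of_abs_le (hfgn1 n))).symm
  · exact (hfgn n).integral_kernel_prod_right'.integrable_of_abs_le
      (abs_integral_kernel_prod_right_le_one (hfgn1 n))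
  · exact ((hf.integral_kernel_prod_right'.comp (hF.iterate n)).mul
      hg.integral_kernel_prod_right').integrable_of_abs_le (hprod1 n)
  · exact (abs_sub _ _).trans
      (by linarith [abs_integral_kernel_prod_right_le_one (κ := κ) (hfgn1 n) ω, hprod1 n ω])

end SkewProduct

theorem skew_product_mixing_general
    {Ω K : Type*} [MetricSpace Ω] [CompactSpace Ω] [MeasurableSpace Ω] [BorelSpace Ω]
    [MetricSpace K] [MeasurableSpace K] [BorelSpace K]
    (Λ : Measure Ω) [IsProbabilityMeasure Λ]
    (F : Ω → Ω) (hF : Measurable F) (hFΛ : Measure.map F Λ = Λ)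
    (hmix : ∀ u v : Ω → ℝ, Measurable u → Measurable v →
      (∃ Cu : ℝ, ∀ ω, |u ω| ≤ Cu) → (∃ Cv : ℝ, ∀ ω, |v ω| ≤ Cv) →
      Tendsto (fun n : ℕ => ∫ ω, u (F^[n] ω) * v ω ∂Λ) atTop
        (nhds ((∫ ω, u ω ∂Λ) * (∫ ω, v ω ∂Λ))))
    (κ : Kernel Ω K) [IsMarkovKernel κ]
    (φ : Ω × K → K) (hφ : Measurable φ)
    (hinv : ∀ᵐ ω ∂Λ, Measure.map (fun x => φ (ω, x)) (κ ω) = κ (F ω))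
    (α : Measure (Ω × K))
    (hα : ∀ B : Set (Ω × K), MeasurableSet B →
      α B = ∫⁻ ω, κ ω {x | (ω, x) ∈ B} ∂Λ)
    (hdecor : ∀ᵐ ω ∂Λ, ∀ h ψ : Ω × K → ℝ, Continuous h → Continuous ψ →
      Tendsto (fun n : ℕ =>
        (∫ x, h ((fun p : Ω × K => (F p.1, φ p))^[n] (ω, x)) * ψ (ω, x) ∂(κ ω)) -
          (∫ y, h (F^[n] ω, y) ∂(κ (F^[n] ω))) * (∫ x, ψ (ω, x) ∂(κ ω)))
        atTop (nhds 0)) :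
    ∀ A B : Set (Ω × K), MeasurableSet A → MeasurableSet B →
      Tendsto (fun n : ℕ => α ((fun p : Ω × K => (F p.1, φ p))^[n] ⁻¹' A ∩ B)) atTop
        (nhds (α A * α B)) := by
  intro A B hA hB
  obtain rfl : α = Λ.compProd κ :=
    Measure.ext fun s hs => by rw [hα s hs, Measure.compProd_apply hs]; rfl
  have hτ := measurePreserving_skewProduct ⟨hF, hFΛ⟩ hφ hinv
  refine tendsto_measure_preimage_iterate_inter_of_continuous hτ
    (fun f g hf hg hf1 hg1 => ?_) hA hB
  have hmix_fg := hmix _ _ (hf.measurable.integral_kernel_prod_right' (κ := κ))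
    (hg.measurable.integral_kernel_prod_right' (κ := κ))
    ⟨1, abs_integral_kernel_prod_right_le_one hf1⟩ ⟨1, abs_integral_kernel_prod_right_le_one hg1⟩
  refine tendsto_integral_comp_iterate_mul_compProd hF hτ.measurable hf.measurable hg.measurable
    hf1 hg1 hmix_fg ?_
  filter_upwards [hdecor] with ω hω using hω f g hf hg

/-- Mixing of the skew product measure `α`. `Ω` and `K` are compact metric spaces,
`F` preserves `Λ` and is mixing, `κ` is a Markov kernel with the a.e. invariance
`φ(ω,·)_* μ_ω = μ_{F ω}`, `α(B) = ∫ μ_ω {x | (ω,x) ∈ B} dΛ(ω)` and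
`τ(ω,x) = (F ω, φ(ω,x))`. Under the fiberwise decorrelation hypothesis,
`τ` is mixing with respect to `α`: `α(τ⁻ⁿ A ∩ B) → α(A) α(B)` for all Borel `A`, `B`. -/
theorem skew_product_mixing
    {Ω K : Type*} [MetricSpace Ω] [CompactSpace Ω] [MeasurableSpace Ω] [BorelSpace Ω]
    [MetricSpace K] [CompactSpace K] [MeasurableSpace K] [BorelSpace K]
    (Λ : Measure Ω) [IsProbabilityMeasure Λ]
    (F : Ω → Ω) (hF : Measurable F) (hFΛ : Measure.map F Λ = Λ)
    (hmix : ∀ u v : Ω → ℝ, Measurable u → Measurable v →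
      (∃ Cu : ℝ, ∀ ω, |u ω| ≤ Cu) → (∃ Cv : ℝ, ∀ ω, |v ω| ≤ Cv) →
      Tendsto (fun n : ℕ => ∫ ω, u (F^[n] ω) * v ω ∂Λ) atTop
        (nhds ((∫ ω, u ω ∂Λ) * (∫ ω, v ω ∂Λ))))
    (κ : Kernel Ω K) [IsMarkovKernel κ]
    (φ : Ω × K → K) (hφ : Measurable φ)
    (hinv : ∀ᵐ ω ∂Λ, Measure.map (fun x => φ (ω, x)) (κ ω) = κ (F ω))
    (α : Measure (Ω × K)) [IsProbabilityMeasure α]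
    (hα : ∀ B : Set (Ω × K), MeasurableSet B →
      α B = ∫⁻ ω, κ ω {x | (ω, x) ∈ B} ∂Λ)
    (hdecor : ∀ᵐ ω ∂Λ, ∀ h ψ : Ω × K → ℝ, Continuous h → Continuous ψ →
      Tendsto (fun n : ℕ =>
        (∫ x, h ((fun p : Ω × K => (F p.1, φ p))^[n] (ω, x)) * ψ (ω, x) ∂(κ ω)) -
          (∫ y, h (F^[n] ω, y) ∂(κ (F^[n] ω))) * (∫ x, ψ (ω, x) ∂(κ ω)))
        atTop (nhds 0)) :
    ∀ A B : Set (Ω × K), MeasurableSet A → MeasurableSet B →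
      Tendsto (fun n : ℕ => α ((fun p : Ω × K => (F p.1, φ p))^[n] ⁻¹' A ∩ B)) atTop
        (nhds (α A * α B)) :=
  skew_product_mixing_general Λ F hF hFΛ hmix κ φ hφ hinv α hα hdecor
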